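/- The homomorphism RO(ΠBT¹) ⊕ RO(ΠBT¹) → RO(ΠBT²) given by (α, β) ↦ π₁*(α) + π₂*(β) factors through the amalgamated direct sum RO(ΠBT¹) ⊕_{RO(C₂)} RO(ΠBT¹) (the quotient of the direct sum by the antidiagonal copy of RO(C₂), i.e. by the elements (γ, −γ) for γ ∈ RO(C₂)), and the induced homomorphism RO(ΠBT¹) ⊕_{RO(C₂)} RO(ΠBT¹) → RO(ΠBT²) is injective with image equal to SRO(ΠBT²). -/

import Mathlib

/-!
The sum map has a left inverse. Send `1` and `σ` to their copies in the first summand,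
`Ω₀₀ ↦ 0`, `Ω₀₁ ↦ (Ω₀, 0)`, `Ω₁₀ ↦ (0, Ω₀)` and `Ω₁₁ ↦ (Ω₁, -Ω₀)`: this kills the relation of
`RO(ΠBT²)` and undoes `π₁* + π₂*` on generators. For `π₂*(Ω₁) = Ω₀₁ + Ω₁₁ ↦ (Ω₀ + Ω₁, -Ω₀)`
this needs the amalgamation, because `Ω₀ + Ω₁ = 2σ - 2` lies in `RO(C₂)`. The image is
generated by the images of the generators of both summands, which are the generators of
`SRO(ΠBT²)`.
-/

noncomputable section

namespace BT2

/-- The free abelian group on the six generators `1, σ, Ω₀₀, Ω₀₁, Ω₁₀, Ω₁₁`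
(indexed `0, 1, 2, 3, 4, 5`). -/
abbrev F6 : Type := Fin 6 →₀ ℤ

/-- The relation `Ω₀₀ + Ω₀₁ + Ω₁₀ + Ω₁₁ − 2σ + 2·1`. -/
def rel2 : F6 :=
  Finsupp.single 2 1 + Finsupp.single 3 1 + Finsupp.single 4 1 + Finsupp.single 5 1
    - 2 • Finsupp.single 1 1 + 2 • Finsupp.single 0 1

/-- The subgroup generated by the relation. -/
def relSub2 : AddSubgroup F6 := AddSubgroup.closure {rel2}

/-- `RO(ΠBT²)`. -/
abbrev RO2 : Type := F6 ⧸ relSub2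

/-- The quotient map for `RO(ΠBT²)`. -/
def mk2 : F6 →+ RO2 := QuotientAddGroup.mk' relSub2

/-- `SRO(ΠBT²)`, the subgroup of `RO(ΠBT²)` generated by the classes of
`1`, `σ`, `Ω₀₀ + Ω₀₁`, `Ω₁₀ + Ω₁₁`, `Ω₀₀ + Ω₁₀` and `Ω₀₁ + Ω₁₁`. -/
def SRO2 : AddSubgroup RO2 :=
  AddSubgroup.closure
    { mk2 (Finsupp.single 0 1), mk2 (Finsupp.single 1 1),
      mk2 (Finsupp.single 2 1 + Finsupp.single 3 1),
      mk2 (Finsupp.single 4 1 + Finsupp.single 5 1),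
      mk2 (Finsupp.single 2 1 + Finsupp.single 4 1),
      mk2 (Finsupp.single 3 1 + Finsupp.single 5 1) }

/-- The free abelian group on the four generators `1, σ, Ω₀, Ω₁`
(indexed `0, 1, 2, 3`). -/
abbrev F4 : Type := Fin 4 →₀ ℤ

/-- The relation `Ω₀ + Ω₁ − 2σ + 2·1`. -/
def rel1 : F4 :=
  Finsupp.single 2 1 + Finsupp.single 3 1 - 2 • Finsupp.single 1 1 + 2 • Finsupp.single 0 1

/-- The subgroup generated by the relation. -/
def relSub1 : AddSubgroup F4 := AddSubgroup.closure {rel1}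

/-- `RO(ΠBT¹)`, the quotient of the free abelian group on `1, σ, Ω₀, Ω₁` by
the relation `Ω₀ + Ω₁ = 2σ − 2·1`. -/
abbrev RO1 : Type := F4 ⧸ relSub1

/-- The quotient map for `RO(ΠBT¹)`. -/
def mk1 : F4 →+ RO1 := QuotientAddGroup.mk' relSub1

/-- The antidiagonal copy of `RO(C₂)` inside `RO(ΠBT¹) ⊕ RO(ΠBT¹)`:
the subgroup of elements `(γ, −γ)` for `γ ∈ RO(C₂) = ℤ{1, σ}`. -/
def antidiag : AddSubgroup (RO1 × RO1) :=
  AddSubgroup.closure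
    { (mk1 (Finsupp.single 0 1), -mk1 (Finsupp.single 0 1)),
      (mk1 (Finsupp.single 1 1), -mk1 (Finsupp.single 1 1)) }

open Finsupp (single)

section FreeAbelianGroup

variable {ι G : Type*} [AddCommGroup G]

def freeLift (t : ι → G) : (ι →₀ ℤ) →+ G := (Finsupp.linearCombination ℤ t).toAddMonoidHom

@[simp] lemma freeLift_single (t : ι → G) (i : ι) (n : ℤ) : freeLift t (single i n) = n • t i := by
  simp [freeLift]

lemma range_freeLift_le {t : ι → G} {S : AddSubgroup G} (ht : ∀ i, t i ∈ S) :
    (freeLift t).range ≤ S := by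
  rintro _ ⟨w, rfl⟩
  induction w using Finsupp.induction_linear with
  | zero => simp
  | add v w hv hw => simpa using S.add_mem hv hw
  | single i n => simpa using S.zsmul_mem (ht i) n

end FreeAbelianGroup

lemma closure_singleton_le_ker {G H : Type*} [AddGroup G] [AddGroup H] {φ : G →+ H} {r : G}
    (h : φ r = 0) : AddSubgroup.closure {r} ≤ φ.ker := by
  rwa [AddSubgroup.closure_le, Set.singleton_subset_iff]

lemma mk1_rel1 : mk1 rel1 = 0 :=
  (QuotientAddGroup.eq_zero_iff _).2 (AddSubgroup.subset_closure rfl)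

lemma mk2_rel2 : mk2 rel2 = 0 :=
  (QuotientAddGroup.eq_zero_iff _).2 (AddSubgroup.subset_closure rfl)

@[simp] lemma mk1_apply (w : F4) : mk1 w = w := rfl

@[simp] lemma mk2_apply (w : F6) : mk2 w = w := rfl

section Lifts

variable {G : Type*} [AddCommGroup G]

def liftRO1 (t : Fin 4 → G) (ht : freeLift t rel1 = 0) : RO1 →+ G :=
  QuotientAddGroup.lift relSub1 (freeLift t) (closure_singleton_le_ker ht)

@[simp] lemma liftRO1_coe (t : Fin 4 → G) (ht : freeLift t rel1 = 0) (w : F4) :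
    liftRO1 t ht w = freeLift t w := rfl

lemma range_liftRO1_le {t : Fin 4 → G} {ht : freeLift t rel1 = 0} {S : AddSubgroup G}
    (hS : ∀ i, t i ∈ S) : (liftRO1 t ht).range ≤ S := by
  rintro _ ⟨x, rfl⟩
  induction x using QuotientAddGroup.induction_on with
  | H w => exact range_freeLift_le hS ⟨w, rfl⟩

def liftRO2 (t : Fin 6 → G) (ht : freeLift t rel2 = 0) : RO2 →+ G :=
  QuotientAddGroup.lift relSub2 (freeLift t) (closure_singleton_le_ker ht)

@[simp] lemma liftRO2_coe (t : Fin 6 → G) (ht : freeLift t rel2 = 0) (w : F6) :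
    liftRO2 t ht w = freeLift t w := rfl

end Lifts

def pullback₁ : RO1 →+ RO2 :=
  liftRO1 ![mk2 (single 0 1), mk2 (single 1 1), mk2 (single 2 1 + single 3 1),
    mk2 (single 4 1 + single 5 1)] (by
    rw [← mk2_rel2]; simp only [rel1, rel2, map_add, map_sub, map_nsmul]; simp; abel)

def pullback₂ : RO1 →+ RO2 :=
  liftRO1 ![mk2 (single 0 1), mk2 (single 1 1), mk2 (single 2 1 + single 4 1),
    mk2 (single 3 1 + single 5 1)] (by
    rw [← mk2_rel2]; simp only [rel1, rel2, map_add, map_sub, map_nsmul]; simp; abel)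

lemma antidiag_le_ker_coprod : antidiag ≤ (pullback₁.coprod pullback₂).ker := by
  rw [antidiag, AddSubgroup.closure_le]
  rintro _ (rfl | rfl) <;> simp [pullback₁, pullback₂]

abbrev AmalgSum : Type := (RO1 × RO1) ⧸ antidiag

def amalgSumMap : AmalgSum →+ RO2 :=
  QuotientAddGroup.lift antidiag (pullback₁.coprod pullback₂) antidiag_le_ker_coprod

@[simp] lemma amalgSumMap_coe (x : RO1 × RO1) :
    amalgSumMap x = pullback₁ x.1 + pullback₂ x.2 := rfl

def amalgInl : RO1 →+ AmalgSum := (QuotientAddGroup.mk' antidiag).comp (AddMonoidHom.inl RO1 RO1)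

def amalgInr : RO1 →+ AmalgSum := (QuotientAddGroup.mk' antidiag).comp (AddMonoidHom.inr RO1 RO1)

lemma amalgInl_eq_amalgInr {γ : RO1} (hγ : (γ, -γ) ∈ antidiag) : amalgInl γ = amalgInr γ := by
  simpa [amalgInl, amalgInr, QuotientAddGroup.eq_iff_sub_mem] using hγ

lemma mk1_omega_add_omega :
    mk1 (single 2 1) + mk1 (single 3 1) = 2 • mk1 (single 1 1) - 2 • mk1 (single 0 1) := by
  rw [← sub_eq_zero, ← mk1_rel1]; simp only [rel1, map_add, map_sub, map_nsmul]; abel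

lemma one_mem_antidiag : (mk1 (single 0 1), -mk1 (single 0 1)) ∈ antidiag :=
  AddSubgroup.subset_closure (by simp)

lemma sigma_mem_antidiag : (mk1 (single 1 1), -mk1 (single 1 1)) ∈ antidiag :=
  AddSubgroup.subset_closure (by simp)

lemma omega_add_omega_mem_antidiag :
    (mk1 (single 2 1) + mk1 (single 3 1), -(mk1 (single 2 1) + mk1 (single 3 1))) ∈ antidiag := by
  convert antidiag.sub_mem (antidiag.nsmul_mem sigma_mem_antidiag 2)
    (antidiag.nsmul_mem one_mem_antidiag 2) using 1
  rw [mk1_omega_add_omega]; ext <;> simp; abel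

def amalgSumRetraction : RO2 →+ AmalgSum :=
  liftRO2 ![amalgInl (mk1 (single 0 1)), amalgInl (mk1 (single 1 1)), 0,
    amalgInl (mk1 (single 2 1)), amalgInr (mk1 (single 2 1)),
    amalgInl (mk1 (single 3 1)) - amalgInr (mk1 (single 2 1))] (calc
      _ = amalgInl (mk1 rel1) := by
        simp only [rel1, rel2, map_add, map_sub, map_nsmul]; simp; abel
      _ = 0 := by rw [mk1_rel1, map_zero])

lemma amalgSumRetraction_comp_pullback₁ : amalgSumRetraction.comp pullback₁ = amalgInl := by
  ext i : 3
  fin_cases i <;> simp [amalgSumRetraction, pullback₁] <;> abel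

lemma amalgSumRetraction_comp_pullback₂ : amalgSumRetraction.comp pullback₂ = amalgInr := by
  have h := amalgInl_eq_amalgInr omega_add_omega_mem_antidiag
  simp only [map_add, mk1_apply] at h
  ext i : 3
  fin_cases i <;> simp [amalgSumRetraction, pullback₂]
  · exact amalgInl_eq_amalgInr one_mem_antidiag
  · exact amalgInl_eq_amalgInr sigma_mem_antidiag
  · abel
  · rw [← add_sub_assoc, h]
    abel

lemma amalgSumRetraction_amalgSumMap (x : AmalgSum) : amalgSumRetraction (amalgSumMap x) = x := by
  induction x using QuotientAddGroup.induction_on with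
  | H x =>
    have hx : (x : AmalgSum) = amalgInl x.1 + amalgInr x.2 := by
      simp [amalgInl, amalgInr, ← QuotientAddGroup.mk_add]
    rw [amalgSumMap_coe, map_add, ← AddMonoidHom.comp_apply, amalgSumRetraction_comp_pullback₁,
      ← AddMonoidHom.comp_apply, amalgSumRetraction_comp_pullback₂, hx]

lemma amalgSumMap_injective : Function.Injective amalgSumMap :=
  Function.LeftInverse.injective amalgSumRetraction_amalgSumMap

lemma range_pullback₁_le : pullback₁.range ≤ SRO2 :=
  range_liftRO1_le fun i => by fin_cases i <;> exact AddSubgroup.subset_closure (by simp)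

lemma range_pullback₂_le : pullback₂.range ≤ SRO2 :=
  range_liftRO1_le fun i => by fin_cases i <;> exact AddSubgroup.subset_closure (by simp)

lemma range_amalgSumMap : amalgSumMap.range = SRO2 := by
  refine le_antisymm ?_ ?_
  · rintro _ ⟨x, rfl⟩
    induction x using QuotientAddGroup.induction_on with
    | H x => exact SRO2.add_mem (range_pullback₁_le ⟨x.1, rfl⟩) (range_pullback₂_le ⟨x.2, rfl⟩)
  · have h₁ (x : RO1) : pullback₁ x ∈ amalgSumMap.range := ⟨amalgInl x, by simp [amalgInl]⟩
    have h₂ (x : RO1) : pullback₂ x ∈ amalgSumMap.range := ⟨amalgInr x, by simp [amalgInr]⟩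
    rw [SRO2, AddSubgroup.closure_le]
    rintro _ (rfl | rfl | rfl | rfl | rfl | rfl)
    · simpa [pullback₁] using h₁ (mk1 (single 0 1))
    · simpa [pullback₁] using h₁ (mk1 (single 1 1))
    · simpa [pullback₁] using h₁ (mk1 (single 2 1))
    · simpa [pullback₁] using h₁ (mk1 (single 3 1))
    · simpa [pullback₂] using h₂ (mk1 (single 2 1))
    · simpa [pullback₂] using h₂ (mk1 (single 3 1))

/-- The map `(α, β) ↦ π₁*(α) + π₂*(β)` from `RO(ΠBT¹) ⊕ RO(ΠBT¹)` to `RO(ΠBT²)`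
factors through the amalgamated direct sum `RO(ΠBT¹) ⊕_{RO(C₂)} RO(ΠBT¹)`
(the quotient by the antidiagonal copy of `RO(C₂)`), and the induced map is
injective with image `SRO(ΠBT²)`. -/
theorem amalgamated_sum_iso_SRO2 :
    ∃ π₁ π₂ : RO1 →+ RO2,
      -- π₁*: 1 ↦ 1, σ ↦ σ, Ω₀ ↦ Ω₀₀ + Ω₀₁, Ω₁ ↦ Ω₁₀ + Ω₁₁
      π₁ (mk1 (Finsupp.single 0 1)) = mk2 (Finsupp.single 0 1) ∧
      π₁ (mk1 (Finsupp.single 1 1)) = mk2 (Finsupp.single 1 1) ∧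
      π₁ (mk1 (Finsupp.single 2 1)) = mk2 (Finsupp.single 2 1 + Finsupp.single 3 1) ∧
      π₁ (mk1 (Finsupp.single 3 1)) = mk2 (Finsupp.single 4 1 + Finsupp.single 5 1) ∧
      -- π₂*: 1 ↦ 1, σ ↦ σ, Ω₀ ↦ Ω₀₀ + Ω₁₀, Ω₁ ↦ Ω₀₁ + Ω₁₁
      π₂ (mk1 (Finsupp.single 0 1)) = mk2 (Finsupp.single 0 1) ∧
      π₂ (mk1 (Finsupp.single 1 1)) = mk2 (Finsupp.single 1 1) ∧
      π₂ (mk1 (Finsupp.single 2 1)) = mk2 (Finsupp.single 2 1 + Finsupp.single 4 1) ∧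
      π₂ (mk1 (Finsupp.single 3 1)) = mk2 (Finsupp.single 3 1 + Finsupp.single 5 1) ∧
      -- the addition map kills the antidiagonal copy of RO(C₂) ...
      (∀ d ∈ antidiag, π₁ d.1 + π₂ d.2 = 0) ∧
      -- injective with image SRO(ΠBT²)
      ∃ f : (RO1 × RO1) ⧸ antidiag →+ RO2,
        (∀ x : RO1 × RO1, f (QuotientAddGroup.mk' antidiag x) = π₁ x.1 + π₂ x.2) ∧
        Function.Injective f ∧
        f.range = SRO2 := by
  refine ⟨pullback₁, pullback₂, ?_, ?_, ?_, ?_, ?_, ?_, ?_, ?_,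
    fun d hd => antidiag_le_ker_coprod hd, amalgSumMap, fun _ => rfl,
    amalgSumMap_injective, range_amalgSumMap⟩ <;>
  simp [pullback₁, pullback₂]

end BT2

end
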